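/- Let X̃* be the Markov chain on ℕ_{>0} with transition probabilities p*_1 = 1/3, r*_1 = 2/3, q*_1 = 0 and, for x ≥ 2, p*_x = x/(3(x+2)), r*_x = x(x+3)/(3(x+1)(x+2)), q*_x = (x+3)/(3(x+1)). Then the probability measure Π on ℕ_{>0} defined by Π(1) = 1/2, Π(2) = 3/10, and Π(x+1)/Π(x) = x/(x+4) for x ≥ 2, is a reversible (hence invariant) probability measure for X̃*: Π(x)p*_x = Π(x+1)q*_{x+1} for all x ≥ 1, and ∑_x Π(x) = 1. -/

import Mathlib

noncomputable def pstar (x : ℕ) : ℝ :=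
  if x = 1 then 1 / 3 else (x : ℝ) / (3 * ((x : ℝ) + 2))

noncomputable def rstar (x : ℕ) : ℝ :=
  if x = 1 then 2 / 3 else (x : ℝ) * ((x : ℝ) + 3) / (3 * ((x : ℝ) + 1) * ((x : ℝ) + 2))

noncomputable def qstar (x : ℕ) : ℝ :=
  if x = 1 then 0 else ((x : ℝ) + 3) / (3 * ((x : ℝ) + 1))

/-! Detailed balance is a direct computation from the recursion for `Π`. For the total mass, the
recursion gives `Π(x) = 36 / (x(x+1)(x+2)(x+3))` for `x ≥ 2`, and this
telescopes as `t(x) - t(x+1)` with `t(x) = 12 / (x(x+1)(x+2))`, so `∑_{x ≥ 2} Π(x) = t(2) = 1/2`. -/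

open Filter Topology Finset

theorem hasSum_sub_succ_of_tendsto {f : ℕ → ℝ} {l : ℝ} (hf : Tendsto f atTop (𝓝 l))
    (hanti : ∀ n, f (n + 1) ≤ f n) : HasSum (fun n ↦ f n - f (n + 1)) (f 0 - l) := by
  refine (hasSum_iff_tendsto_nat_of_nonneg (fun n ↦ sub_nonneg.mpr (hanti n)) _).mpr ?_
  simpa only [sum_range_sub'] using hf.const_sub (f 0)

theorem pstar_add_rstar_add_qstar {x : ℕ} (hx : 1 ≤ x) : pstar x + rstar x + qstar x = 1 := by
  obtain rfl | hx := hx.eq_or_lt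
  · norm_num [pstar, rstar, qstar]
  · have hx' : (2 : ℝ) ≤ x := by exact_mod_cast hx
    simp only [pstar, rstar, qstar, if_neg hx.ne']
    field_simp
    ring

theorem detailed_balance {Pi : ℕ → ℝ} (h1 : Pi 1 = 1 / 2) (h2 : Pi 2 = 3 / 10)
    (hrec : ∀ x : ℕ, 2 ≤ x → Pi (x + 1) = Pi x * x / ((x : ℝ) + 4)) {x : ℕ} (hx : 1 ≤ x) :
    Pi x * pstar x = Pi (x + 1) * qstar (x + 1) := by
  obtain rfl | hx := hx.eq_or_lt
  · norm_num [pstar, qstar, h1, h2]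
  · have hx' : (2 : ℝ) ≤ x := by exact_mod_cast hx
    simp only [pstar, qstar, if_neg hx.ne', if_neg (by omega : x + 1 ≠ 1), hrec x hx]
    push_cast
    field_simp
    ring

theorem add_two_eq_closed_form {Pi : ℕ → ℝ} (h2 : Pi 2 = 3 / 10)
    (hrec : ∀ x : ℕ, 2 ≤ x → Pi (x + 1) = Pi x * x / ((x : ℝ) + 4)) (n : ℕ) :
    Pi (n + 2) = 36 / (((n : ℝ) + 2) * (n + 3) * (n + 4) * (n + 5)) := by
  induction n with
  | zero => norm_num [h2]
  | succ n ih =>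
    rw [hrec (n + 2) (by omega), ih]
    push_cast
    field_simp
    ring

theorem hasSum_comp_add_two {Pi : ℕ → ℝ} (h2 : Pi 2 = 3 / 10)
    (hrec : ∀ x : ℕ, 2 ≤ x → Pi (x + 1) = Pi x * x / ((x : ℝ) + 4)) :
    HasSum (fun n ↦ Pi (n + 2)) (1 / 2) := by
  set t : ℕ → ℝ := fun n ↦ 12 / (((n : ℝ) + 2) * (n + 3) * (n + 4)) with ht
  have ht_tendsto : Tendsto t atTop (𝓝 0) := by
    refine tendsto_const_nhds.div_atTop (tendsto_atTop_mono (fun n ↦ ?_) tendsto_natCast_atTop_atTop)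
    have hn : (0 : ℝ) ≤ n := n.cast_nonneg
    nlinarith [mul_nonneg hn hn]
  have ht_anti : ∀ n, t (n + 1) ≤ t n := fun n ↦ by
    simp only [ht]
    gcongr <;> linarith
  have h_telescope : ∀ n, Pi (n + 2) = t n - t (n + 1) := fun n ↦ by
    rw [add_two_eq_closed_form h2 hrec, ht]
    push_cast
    field_simp
    ring
  convert hasSum_sub_succ_of_tendsto ht_tendsto ht_anti using 1
  · exact funext h_telescope
  · norm_num [ht]

/-- The measure `Π` with `Π(1)=1/2`, `Π(2)=3/10`, `Π(x+1)/Π(x)=x/(x+4)` for `x ≥ 2`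
is a reversible probability measure for the conditioned chain `X̃*`: the transition
probabilities sum to one, detailed balance holds, and `Π` has total mass `1`. -/
theorem stmt_9 (Pi : ℕ → ℝ) (h1 : Pi 1 = 1 / 2) (h2 : Pi 2 = 3 / 10)
    (hrec : ∀ x : ℕ, 2 ≤ x → Pi (x + 1) = Pi x * x / ((x : ℝ) + 4)) :
    (∀ x : ℕ, 1 ≤ x → pstar x + rstar x + qstar x = 1) ∧
    (∀ x : ℕ, 1 ≤ x → Pi x * pstar x = Pi (x + 1) * qstar (x + 1)) ∧
    HasSum (fun x : {n : ℕ // 1 ≤ n} => Pi x) 1 := by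
  refine ⟨fun x hx ↦ pstar_add_rstar_add_qstar hx, fun x hx ↦ detailed_balance h1 h2 hrec hx, ?_⟩
  have h_tail := (hasSum_nat_add_iff (f := fun n ↦ Pi (n + 1)) 1).mp (hasSum_comp_add_two h2 hrec)
  norm_num [h1] at h_tail
  -- `{n : ℕ // 1 ≤ n}` is `ℕ+` by definition
  exact (hasSum_pnat_iff_hasSum_succ (f := Pi)).mpr h_tail
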